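/- Let ⟨x,y⟩₁ = −x₀y₀ + x₁y₁ + x₂y₂ + x₃y₃ + x₄y₄ denote the Lorentzian bilinear form on ℝ⁵. Let a be a nonzero real number and b a real number with b/a − 1/(4a²) − 1 ≥ 0, and define Θ(t,u) = (a(t² + u²) + b, t, u, √(b/a − 1/(4a²) − 1), a(t² + u²) − 1/(2a) + b). Then for all (t,u): ⟨Θ, Θ⟩₁ = −1 (so Θ takes values in H⁴ = {x ∈ ℝ⁵ : ⟨x,x⟩₁ = −1}), and ⟨∂ₜΘ, ∂ₜΘ⟩₁ = 1, ⟨∂ᵤΘ, ∂ᵤΘ⟩₁ = 1, ⟨∂ₜΘ, ∂ᵤΘ⟩₁ = 0. -/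

import Mathlib

/-!
The quadratic part of `Θ` moves along the null vector `ℓ = (1, 0, 0, 0, 1)`, which is
`lor5`-orthogonal to `e₁` and `e₂`; hence `∂ₜΘ = e₁ + 2at ℓ` and `∂ᵤΘ = e₂ + 2au ℓ` are orthonormal,
and `⟨Θ, Θ⟩₁` does not depend on `(t, u)`: the constant `√(b/a − 1/(4a²) − 1)` is chosen to make it `−1`.
-/

/-- The Lorentzian bilinear form on `ℝ⁵` with timelike coordinate `x₀`. -/
def lor5 (x y : Fin 5 → ℝ) : ℝ :=
  -(x 0 * y 0) + x 1 * y 1 + x 2 * y 2 + x 3 * y 3 + x 4 * y 4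

noncomputable def lightlikeParaboloid (a b s t u : ℝ) : Fin 5 → ℝ :=
  ![a * (t ^ 2 + u ^ 2) + b, t, u, s, a * (t ^ 2 + u ^ 2) - 1 / (2 * a) + b]

theorem lor5_lightlikeParaboloid_self {a : ℝ} (ha : a ≠ 0) (b s t u : ℝ) :
    lor5 (lightlikeParaboloid a b s t u) (lightlikeParaboloid a b s t u) =
      s ^ 2 - (b / a - 1 / (4 * a ^ 2)) := by
  simp only [lor5, lightlikeParaboloid, Matrix.cons_val]
  field_simp
  ring

theorem hasDerivAt_lightlikeParaboloid_left (a b s t u : ℝ) :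
    HasDerivAt (fun t ↦ lightlikeParaboloid a b s t u) ![2 * a * t, 1, 0, 0, 2 * a * t] t := by
  have hq : HasDerivAt (fun t : ℝ ↦ a * (t ^ 2 + u ^ 2)) (2 * a * t) t :=
    (((hasDerivAt_pow 2 t).add_const (u ^ 2)).const_mul a).congr_deriv (by ring)
  refine hasDerivAt_pi.2 fun i ↦ ?_
  fin_cases i
  · exact hq.add_const b
  · exact hasDerivAt_id t
  · exact hasDerivAt_const t u
  · exact hasDerivAt_const t s
  · exact (hq.sub_const _).add_const b

theorem hasDerivAt_lightlikeParaboloid_right (a b s t u : ℝ) :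
    HasDerivAt (fun u ↦ lightlikeParaboloid a b s t u) ![2 * a * u, 0, 1, 0, 2 * a * u] u := by
  have hq : HasDerivAt (fun u : ℝ ↦ a * (t ^ 2 + u ^ 2)) (2 * a * u) u :=
    (((hasDerivAt_pow 2 u).const_add (t ^ 2)).const_mul a).congr_deriv (by ring)
  refine hasDerivAt_pi.2 fun i ↦ ?_
  fin_cases i
  · exact hq.add_const b
  · exact hasDerivAt_const u t
  · exact hasDerivAt_id u
  · exact hasDerivAt_const u s
  · exact (hq.sub_const _).add_const b

/-- Case (4) of Proposition 4.3: the paraboloid-type surface in a lightlike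
direction is a unit-speed orthogonal parametrization lying in `H⁴ ⊂ ℝ⁵₁`. -/
theorem stmt_10 (a b : ℝ) (ha : a ≠ 0)
    (hb : b / a - 1 / (4 * a ^ 2) - 1 ≥ 0)
    (Θ : ℝ → ℝ → Fin 5 → ℝ)
    (hΘ : ∀ t u : ℝ, Θ t u =
      ![a * (t ^ 2 + u ^ 2) + b, t, u,
        Real.sqrt (b / a - 1 / (4 * a ^ 2) - 1),
        a * (t ^ 2 + u ^ 2) - 1 / (2 * a) + b]) :
    ∀ t u : ℝ,
      lor5 (Θ t u) (Θ t u) = -1 ∧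
      lor5 (deriv (fun t' => Θ t' u) t) (deriv (fun t' => Θ t' u) t) = 1 ∧
      lor5 (deriv (fun u' => Θ t u') u) (deriv (fun u' => Θ t u') u) = 1 ∧
      lor5 (deriv (fun t' => Θ t' u) t) (deriv (fun u' => Θ t u') u) = 0 := by
  set s := √(b / a - 1 / (4 * a ^ 2) - 1)
  obtain rfl : Θ = lightlikeParaboloid a b s := funext₂ hΘ
  intro t u
  rw [(hasDerivAt_lightlikeParaboloid_left a b s t u).deriv,
    (hasDerivAt_lightlikeParaboloid_right a b s t u).deriv,
    lor5_lightlikeParaboloid_self ha, Real.sq_sqrt hb]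
  refine ⟨by ring, ?_, ?_, ?_⟩ <;> simp [lor5]
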